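/- arXiv:1410.0229 — 3 statements merged into one kernel-verified Lean document; each statement's English description precedes it below -/
import Mathlib

section
/- For any graph G on n vertices, the k-th signless Laplacian spectral moment T_k(G) = sum of q_i^k over all signless Laplacian eigenvalues q_i equals the number of closed semi-edge walks of length k in G. -/
open scoped Classical

variable {V : Type*}

/-- The signless Laplacian matrix `Q = D + A` of a graph. -/
noncomputable def sLap (G : SimpleGraph V) [Fintype V] : Matrix V V ℝ :=
  Matrix.diagonal (fun v => (G.degree v : ℝ)) + G.adjMatrix ℝ

theorem sLap_isHermitian (G : SimpleGraph V) [Fintype V] : (sLap G).IsHermitian := by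
  unfold sLap
  rw [Matrix.IsHermitian, Matrix.conjTranspose_eq_transpose_of_trivial, Matrix.transpose_add,
    Matrix.diagonal_transpose, SimpleGraph.transpose_adjMatrix]

/-- The Laplacian matrix `L = D - A` of a graph. -/
noncomputable def lap (G : SimpleGraph V) [Fintype V] : Matrix V V ℝ :=
  Matrix.diagonal (fun v => (G.degree v : ℝ)) - G.adjMatrix ℝ

theorem lap_isHermitian (G : SimpleGraph V) [Fintype V] : (lap G).IsHermitian := by
  unfold lap
  rw [Matrix.IsHermitian, Matrix.conjTranspose_eq_transpose_of_trivial, Matrix.transpose_sub,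
    Matrix.diagonal_transpose, SimpleGraph.transpose_adjMatrix]

/-- The signless Laplacian Estrada index: the sum of `exp qᵢ` over the eigenvalues of `Q`. -/
noncomputable def SLEE (G : SimpleGraph V) [Fintype V] : ℝ :=
  ∑ i, Real.exp ((sLap_isHermitian G).eigenvalues i)

/-- The Laplacian Estrada index: the sum of `exp μᵢ` over the eigenvalues of `L`. -/
noncomputable def LEE (G : SimpleGraph V) [Fintype V] : ℝ :=
  ∑ i, Real.exp ((lap_isHermitian G).eigenvalues i)

/-- Semi-edge walks of length `k` from `x` to `y`: a sequence of `k+1` vertices and `k`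
edges of `G` such that consecutive vertices are (not necessarily distinct) endpoints of
the intervening edge. -/
def semiEdgeWalks (G : SimpleGraph V) (k : ℕ) (x y : V) :
    Set ((Fin (k + 1) → V) × (Fin k → Sym2 V)) :=
  {w | w.1 0 = x ∧ w.1 (Fin.last k) = y ∧
    ∀ i : Fin k, w.2 i ∈ G.edgeSet ∧ w.1 i.castSucc ∈ w.2 i ∧ w.1 i.succ ∈ w.2 i}

/-- Closed semi-edge walks of length `k` in `G`. -/
def closedSemiEdgeWalks (G : SimpleGraph V) (k : ℕ) :
    Set ((Fin (k + 1) → V) × (Fin k → Sym2 V)) :=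
  {w | w.1 0 = w.1 (Fin.last k) ∧
    ∀ i : Fin k, w.2 i ∈ G.edgeSet ∧ w.1 i.castSucc ∈ w.2 i ∧ w.1 i.succ ∈ w.2 i}

/-- The number of connected components of a graph. -/
noncomputable def numComponents (G : SimpleGraph V) : ℕ := Nat.card G.ConnectedComponent

/-- A cut vertex: a vertex whose removal increases the number of connected components. -/
def IsCutVertex (G : SimpleGraph V) (v : V) : Prop :=
  numComponents G < numComponents (G.induce ({v}ᶜ : Set V))

/-- The number of cut vertices of a graph. -/
noncomputable def cutVertexCount (G : SimpleGraph V) [Fintype V] : ℕ :=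
  (Finset.univ.filter (fun v => IsCutVertex G v)).card

/-- The graph obtained from `G` by adding the edge `uv`. -/
def addEdge (G : SimpleGraph V) (u v : V) : SimpleGraph V :=
  G ⊔ SimpleGraph.fromEdgeSet {s(u, v)}

/-- A block of `G`: a maximal vertex set inducing a connected subgraph with no cut vertex. -/
def IsBlock (G : SimpleGraph V) (B : Set V) : Prop :=
  (G.induce B).Connected ∧ (∀ v : B, ¬ IsCutVertex (G.induce B) v) ∧
  ∀ C : Set V, B ⊆ C → (G.induce C).Connected → (∀ v : C, ¬ IsCutVertex (G.induce C) v) →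
    B = C

/-!
Writing `B` for the vertex–edge incidence matrix, `Q = B Bᵀ`, so `Q u v` counts the edges
containing both `u` and `v`, i.e. the possible single steps of a semi-edge walk from `u` to `v`.
Expanding the matrix product, `(Q ^ k) x y` counts semi-edge walks of length `k` from `x` to `y`,
and summing over the diagonal gives `tr (Q ^ k) = ∑ qᵢ ^ k` by the spectral theorem.
-/

open Matrix

namespace Matrix.IsHermitian

variable {𝕜 n : Type*} [RCLike 𝕜] [Fintype n] [DecidableEq n] {A : Matrix n n 𝕜}

lemma trace_cfc (hA : A.IsHermitian) (f : ℝ → ℝ) :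
    (cfc f A).trace = ∑ i, (f (hA.eigenvalues i) : 𝕜) := by
  rw [hA.cfc_eq, IsHermitian.cfc, Unitary.conjStarAlgAut_apply, trace_mul_cycle,
    Unitary.coe_star_mul_self, one_mul, trace_diagonal]
  rfl

lemma trace_pow (hA : A.IsHermitian) (k : ℕ) :
    (A ^ k).trace = ∑ i, (hA.eigenvalues i : 𝕜) ^ k := by
  rw [← cfc_pow_id (R := ℝ) A k hA.isSelfAdjoint, hA.trace_cfc]
  push_cast
  rfl

end Matrix.IsHermitian

section LabeledWalks

variable {E : Type*}

/-- Walks whose steps `u → v` are labelled by some `e` with `r u e v`; `semiEdgeWalks G` is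
definitionally the case `r u e v := e ∈ G.edgeSet ∧ u ∈ e ∧ v ∈ e`. -/
def labeledWalks (r : V → E → V → Prop) (k : ℕ) (x y : V) :
    Set ((Fin (k + 1) → V) × (Fin k → E)) :=
  {w | w.1 0 = x ∧ w.1 (Fin.last k) = y ∧ ∀ i, r (w.1 i.castSucc) (w.2 i) (w.1 i.succ)}

def labeledWalksZeroEquiv (r : V → E → V → Prop) (x y : V) :
    labeledWalks r 0 x y ≃ PLift (x = y) where
  toFun w := ⟨w.2.1 ▸ w.2.2.1⟩
  invFun h := ⟨(fun _ => x, Fin.elim0), rfl, h.down, fun i => i.elim0⟩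
  left_inv := by
    rintro ⟨⟨v, e⟩, rfl, -, -⟩
    ext : 2
    · funext i; rw [Fin.fin_one_eq_zero i]
    · funext i; exact i.elim0
  right_inv _ := rfl

def labeledWalksSuccEquiv (r : V → E → V → Prop) (k : ℕ) (x y : V) :
    labeledWalks r (k + 1) x y ≃ Σ z, {e // r x e z} × labeledWalks r k z y where
  toFun w := ⟨w.1.1 (Fin.succ 0), ⟨w.1.2 0, by simpa [← w.2.1] using w.2.2.2 0⟩,
    ⟨(Fin.tail w.1.1, Fin.tail w.1.2), rfl, w.2.2.1, fun i => w.2.2.2 i.succ⟩⟩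
  invFun := fun ⟨_, ⟨f, hf⟩, ⟨⟨v, e⟩, h0, hl, hs⟩⟩ =>
    ⟨(Fin.cons x v, Fin.cons f e), rfl, hl, Fin.cases (h0 ▸ hf) hs⟩
  left_inv := by
    rintro ⟨⟨v, e⟩, rfl, hl, hs⟩
    simp
  right_inv := by
    rintro ⟨z, ⟨f, hf⟩, ⟨⟨v, e⟩, rfl, hl, hs⟩⟩
    rfl

variable [Fintype V] [Fintype E] [DecidableEq V]

theorem pow_apply_eq_card_labeledWalks {R : Type*} [Semiring R] (r : V → E → V → Prop)
    (M : Matrix V V R) (hM : ∀ u v, M u v = Nat.card {e // r u e v}) (k : ℕ) (x y : V) :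
    (M ^ k) x y = Nat.card (labeledWalks r k x y) := by
  induction k generalizing x with
  | zero =>
    rw [pow_zero, Nat.card_congr (labeledWalksZeroEquiv r x y), Matrix.one_apply]
    split_ifs with h <;> simp [h]
  | succ k ih =>
    rw [pow_succ', Matrix.mul_apply, Nat.card_congr (labeledWalksSuccEquiv r k x y),
      Nat.card_sigma, Nat.cast_sum]
    simp only [ih, hM, Nat.card_prod, Nat.cast_mul]

end LabeledWalks

namespace SimpleGraph

variable [Fintype V]

theorem incMatrix_mul_transpose_apply_eq_card {R : Type*} [Semiring R] (G : SimpleGraph V)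
    [DecidableEq V] [DecidableRel G.Adj] (u v : V) :
    (G.incMatrix R * (G.incMatrix R)ᵀ) u v = Nat.card {e // e ∈ G.edgeSet ∧ u ∈ e ∧ v ∈ e} := by
  simp_rw [Matrix.mul_apply, Matrix.transpose_apply, incMatrix_apply_mul_incMatrix_apply,
    Set.indicator_apply, Pi.one_apply, Finset.sum_boole, Nat.card_eq_fintype_card,
    Fintype.card_subtype]
  congr 2
  ext e
  simp only [incidenceSet, Set.mem_inter_iff, Set.mem_ofPred_eq, Finset.mem_filter,
    Finset.mem_univ, true_and]
  tauto

end SimpleGraph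

theorem sLap_eq_incMatrix_mul_transpose (G : SimpleGraph V) [Fintype V] :
    sLap G = G.incMatrix ℝ * (G.incMatrix ℝ)ᵀ := by
  rw [SimpleGraph.incMatrix_mul_transpose]
  ext u v
  by_cases h : u = v
  · subst h
    simp [sLap]
  · simp [sLap, h, SimpleGraph.adjMatrix_apply]

theorem sLap_apply (G : SimpleGraph V) [Fintype V] (u v : V) :
    sLap G u v = Nat.card {e // e ∈ G.edgeSet ∧ u ∈ e ∧ v ∈ e} := by
  rw [sLap_eq_incMatrix_mul_transpose, SimpleGraph.incMatrix_mul_transpose_apply_eq_card]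

theorem sLap_pow_apply (G : SimpleGraph V) [Fintype V] (k : ℕ) (x y : V) :
    (sLap G ^ k) x y = Nat.card (semiEdgeWalks G k x y) :=
  pow_apply_eq_card_labeledWalks _ _ (sLap_apply G) k x y

def closedSemiEdgeWalksEquivSigma (G : SimpleGraph V) (k : ℕ) :
    closedSemiEdgeWalks G k ≃ Σ x, semiEdgeWalks G k x x where
  toFun w := ⟨w.1.1 0, w.1, rfl, w.2.1.symm, w.2.2⟩
  invFun := fun ⟨_, w, h0, hl, hs⟩ => ⟨w, h0.trans hl.symm, hs⟩
  left_inv _ := rfl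
  right_inv := by
    rintro ⟨x, w, rfl, hl, hs⟩
    rfl

/-- the k-th signless Laplacian spectral moment equals the number of closed
semi-edge walks of length k. -/
theorem spectral_moment_eq_card_closedSemiEdgeWalks (G : SimpleGraph V) [Fintype V] (k : ℕ) :
    (∑ i, ((sLap_isHermitian G).eigenvalues i) ^ k) =
      (Nat.card (closedSemiEdgeWalks G k) : ℝ) := by
  calc ∑ i, (sLap_isHermitian G).eigenvalues i ^ k = (sLap G ^ k).trace :=
        ((sLap_isHermitian G).trace_pow k).symm
    _ = ∑ x, (Nat.card (semiEdgeWalks G k x x) : ℝ) := by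
        simp only [Matrix.trace, Matrix.diag, sLap_pow_apply]
    _ = Nat.card (closedSemiEdgeWalks G k) := by
        rw [Nat.card_congr (closedSemiEdgeWalksEquivSigma G k), Nat.card_sigma, Nat.cast_sum]
end

section
/- The number of closed semi-edge walks of length k in a finite simple graph G equals the trace of Q^k, where Q = D + A is the signless Laplacian matrix of G. -/
open scoped Classical

variable {V : Type*}

/-! The signless Laplacian factors as `Q = B Bᵀ` with `B` the vertex–edge incidence matrix, so
`Q v w` counts the edges containing both `v` and `w`, i.e. the semi-edge steps from `v` to `w`.
Expanding `tr (Q ^ k)` as a sum over closed vertex sequences of products of entries of `Q`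
therefore counts closed semi-edge walks. -/

namespace Matrix

variable {n R : Type*} [Fintype n] [DecidableEq n] [CommSemiring R]

theorem pow_apply_eq_sum_prod (M : Matrix n n R) (k : ℕ) (x y : n) :
    (M ^ k) x y = ∑ f : Fin (k + 1) → n,
      if f 0 = x ∧ f (Fin.last k) = y then ∏ i : Fin k, M (f i.castSucc) (f i.succ) else 0 := by
  induction k generalizing x with
  | zero =>
    rw [← (Equiv.funUnique (Fin 1) n).symm.sum_comp]
    simp [one_apply, ite_and]
  | succ k ih =>
    calc (M ^ (k + 1)) x y
        = ∑ f : Fin (k + 1) → n, if f (Fin.last k) = y then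
            M x (f 0) * ∏ i : Fin k, M (f i.castSucc) (f i.succ) else 0 := by
          simp only [pow_succ', mul_apply, ih, Finset.mul_sum, ite_and, mul_ite, mul_zero]
          rw [Finset.sum_comm]
          simp
      _ = _ := by
          conv_rhs => rw [← (Fin.consEquiv fun _ => n).sum_comp, Fintype.sum_prod_type]
          rw [Finset.sum_comm]
          simp [Fin.prod_univ_succ, ← Fin.succ_last, ite_and]

theorem trace_pow_eq_sum_prod (M : Matrix n n R) (k : ℕ) :
    (M ^ k).trace = ∑ f : Fin (k + 1) → n,
      if f 0 = f (Fin.last k) then ∏ i : Fin k, M (f i.castSucc) (f i.succ) else 0 := by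
  simp only [trace, diag_apply, pow_apply_eq_sum_prod]
  rw [Finset.sum_comm]
  simp [ite_and, eq_comm]

end Matrix

open Finset Matrix

namespace SimpleGraph

variable (G : SimpleGraph V) [Fintype V]

theorem sLap_eq_incMatrix_mul_transpose : sLap G = G.incMatrix ℝ * (G.incMatrix ℝ)ᵀ := by
  rw [incMatrix_mul_transpose]
  ext v w
  rcases eq_or_ne v w with rfl | hvw
  · simp [sLap]
  · simp [sLap, hvw, adjMatrix_apply]

theorem sLap_apply (v w : V) :
    sLap G v w = #{e | e ∈ G.edgeSet ∧ v ∈ e ∧ w ∈ e} := by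
  simp only [sLap_eq_incMatrix_mul_transpose, mul_apply, transpose_apply,
    incMatrix_apply_mul_incMatrix_apply, Set.indicator_apply, Pi.one_apply, sum_boole]
  congr 2
  ext e
  simp only [mem_filter, mem_univ, true_and, incidenceSet, Set.mem_inter_iff, Set.mem_ofPred_eq]
  tauto

theorem card_closedSemiEdgeWalks (k : ℕ) :
    Nat.card (closedSemiEdgeWalks G k) = ∑ f : Fin (k + 1) → V,
      if f 0 = f (Fin.last k) then
        ∏ i : Fin k, #{e | e ∈ G.edgeSet ∧ f i.castSucc ∈ e ∧ f i.succ ∈ e}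
      else 0 := by
  rw [Nat.card_eq_fintype_card, Fintype.card_subtype, card_filter, Fintype.sum_prod_type]
  refine sum_congr rfl fun f _ => ?_
  split_ifs with hf
  · simp only [card_filter, Fintype.prod_sum, prod_boole, mem_univ, true_implies]
    simp [closedSemiEdgeWalks, hf]
  · simp [closedSemiEdgeWalks, hf]

end SimpleGraph

/-- the number of closed semi-edge walks of length k equals trace(Q^k). -/
theorem card_closedSemiEdgeWalks_eq_trace_pow (G : SimpleGraph V) [Fintype V] (k : ℕ) :
    (Nat.card (closedSemiEdgeWalks G k) : ℝ) = Matrix.trace (sLap G ^ k) := by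
  rw [G.card_closedSemiEdgeWalks, Matrix.trace_pow_eq_sum_prod]
  push_cast
  simp only [SimpleGraph.sLap_apply]
end

section
/- If e is an edge not belonging to a finite simple graph G, then SLEE(G) < SLEE(G + e), i.e., adding an edge strictly increases the signless Laplacian Estrada index. -/
open scoped Classical

variable {V : Type*}

/-! `SLEE G` is the trace of `exp Q`, i.e. `∑ₖ tr (Qᵏ) / k!`. Adding edges makes the entrywise
nonnegative matrix `Q` entrywise larger, hence every `tr (Qᵏ)` too, and `tr Q = 2 |E|` grows
strictly. -/

namespace Matrix

variable {n : Type*} [Fintype n] [DecidableEq n]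

lemma pow_apply_le_pow_apply {R : Type*} [Semiring R] [PartialOrder R] [IsOrderedRing R]
    {A B : Matrix n n R} (hA : ∀ i j, 0 ≤ A i j) (hAB : ∀ i j, A i j ≤ B i j) (k : ℕ) (i j : n) :
    (A ^ k) i j ≤ (B ^ k) i j := by
  induction k generalizing j with
  | zero => rfl
  | succ k ih =>
    rw [pow_succ, pow_succ, mul_apply, mul_apply]
    exact Finset.sum_le_sum fun l _ =>
      mul_le_mul (ih l) (hAB l j) (hA l j) ((pow_apply_nonneg hA k i l).trans (ih l))

open NormedSpace Nat

attribute [local instance] Matrix.linftyOpNormedRing Matrix.linftyOpNormedAlgebra in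
lemma hasSum_trace_exp (A : Matrix n n ℝ) :
    HasSum (fun k => (k ! : ℝ)⁻¹ * (A ^ k).trace) (exp A).trace := by
  have h := (exp_series_hasSum_exp' (𝕂 := ℝ) A).mapL (traceLinearMap n ℝ ℝ).toContinuousLinearMap
  simp only [LinearMap.coe_toContinuousLinearMap', traceLinearMap_apply, trace_smul,
    smul_eq_mul] at h
  exact h

lemma IsHermitian.trace_exp {A : Matrix n n ℝ} (hA : A.IsHermitian) :
    (NormedSpace.exp A).trace = ∑ i, Real.exp (hA.eigenvalues i) := by
  set U : Matrix n n ℝ := (hA.eigenvectorUnitary : Matrix n n ℝ)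
  have hUU : star U * U = 1 := mem_unitaryGroup_iff'.mp hA.eigenvectorUnitary.2
  have hinv : U⁻¹ = star U := inv_eq_left_inv hUU
  have hA' : A = U * diagonal (RCLike.ofReal ∘ hA.eigenvalues) * U⁻¹ := by
    rw [hinv]; exact hA.spectral_theorem
  conv_lhs => rw [hA']
  rw [exp_conj _ _ (IsUnit.of_mul_eq_one_right _ hUU), trace_mul_cycle, hinv, hUU, one_mul,
    exp_diagonal, trace_diagonal]
  simp [Real.exp_eq_exp_ℝ]

lemma trace_exp_lt_trace_exp {A B : Matrix n n ℝ} (hA : ∀ i j, 0 ≤ A i j)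
    (hAB : ∀ i j, A i j ≤ B i j) (htr : A.trace < B.trace) :
    (exp A).trace < (exp B).trace := by
  refine hasSum_lt (f := fun k => (k ! : ℝ)⁻¹ * (A ^ k).trace) (i := 1) (fun k => ?_) ?_
    (hasSum_trace_exp A) (hasSum_trace_exp B)
  · exact mul_le_mul_of_nonneg_left
      (Finset.sum_le_sum fun i _ => pow_apply_le_pow_apply hA hAB k i i) (by positivity)
  · simpa using htr

end Matrix

lemma lt_addEdge {G : SimpleGraph V} {u v : V} (hne : u ≠ v) (h : ¬ G.Adj u v) :
    G < addEdge G u v :=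
  left_lt_sup.2 fun hle => h (hle (by simpa [SimpleGraph.fromEdgeSet_adj] using hne))

section Finite

open Finset

variable [Fintype V]

lemma sLap_apply_nonneg (G : SimpleGraph V) (i j : V) : 0 ≤ sLap G i j := by
  unfold sLap
  simp only [Matrix.add_apply, Matrix.diagonal_apply, SimpleGraph.adjMatrix_apply]
  positivity

lemma sLap_apply_le_sLap_apply {G H : SimpleGraph V} (hGH : G ≤ H) (i j : V) :
    sLap G i j ≤ sLap H i j := by
  unfold sLap
  simp only [Matrix.add_apply, Matrix.diagonal_apply, SimpleGraph.adjMatrix_apply]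
  gcongr
  · split_ifs <;> simp [SimpleGraph.degree_le_of_le hGH]
  · split_ifs with hG hH
    · rfl
    · exact absurd (hGH hG) hH
    all_goals norm_num

lemma trace_sLap (G : SimpleGraph V) : (sLap G).trace = 2 * #G.edgeFinset := by
  rw [sLap, Matrix.trace_add, Matrix.trace_diagonal, SimpleGraph.trace_adjMatrix, add_zero,
    ← Nat.cast_sum, SimpleGraph.sum_degrees_eq_twice_card_edges]
  norm_cast

lemma SLEE_strictMono : StrictMono (fun G : SimpleGraph V => SLEE G) := by
  intro G H hGH
  have htr : (sLap G).trace < (sLap H).trace := by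
    have hcard : #G.edgeFinset < #H.edgeFinset :=
      card_lt_card (SimpleGraph.edgeFinset_strict_mono hGH)
    rw [trace_sLap, trace_sLap]
    gcongr
  have := Matrix.trace_exp_lt_trace_exp (sLap_apply_nonneg G) (sLap_apply_le_sLap_apply hGH.le) htr
  rwa [(sLap_isHermitian G).trace_exp, (sLap_isHermitian H).trace_exp] at this

end Finite

/-- adding an edge strictly increases the signless Laplacian Estrada index. -/
theorem SLEE_lt_SLEE_addEdge (G : SimpleGraph V) [Fintype V] (u v : V)
    (hne : u ≠ v) (h : ¬ G.Adj u v) :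
    SLEE G < SLEE (addEdge G u v) :=
  SLEE_strictMono (lt_addEdge hne h)
end
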